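/- Let V be a finite set of n points in ℝ^d, with n odd and n ≥ 3, in which all pairwise distances between distinct points are distinct. If R^{(1)}(V) = (n−1)/2, then in the 1NN digraph of V exactly one point has indegree 0, exactly n−2 points have indegree 1, exactly one point has indegree 2, and no point has indegree 3 or more; i.e., Q_0^{(1)}(V) = 1, Q_1^{(1)}(V) = n−2, Q_2^{(1)}(V) = 1, and Q_j^{(1)}(V) = 0 for all j ≥ 3. -/

import Mathlib

/-- All pairwise distances between distinct points of `V` are distinct. -/
def DistinctDists {d : ℕ} (V : Set (EuclideanSpace ℝ (Fin d))) : Prop :=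
  ∀ u v u' v', u ∈ V → v ∈ V → u' ∈ V → v' ∈ V → u ≠ v → u' ≠ v' →
    dist u v = dist u' v' → (u = u' ∧ v = v') ∨ (u = v' ∧ v = u')

/-- `IsNN V v u` : `u` is the (unique) nearest neighbor of `v` in `V`, i.e. `NN(v) = u`. -/
def IsNN {d : ℕ} (V : Set (EuclideanSpace ℝ (Fin d))) (v u : EuclideanSpace ℝ (Fin d)) : Prop :=
  u ∈ V ∧ u ≠ v ∧ ∀ w ∈ V, w ≠ v → w ≠ u → dist v u < dist v w

/-- `R^{(1)}(V)`: the number of reflexive nearest-neighbor pairs of `V`. -/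
noncomputable def reflCount {d : ℕ} (V : Set (EuclideanSpace ℝ (Fin d))) : ℕ :=
  {p : Sym2 (EuclideanSpace ℝ (Fin d)) | ∃ u v, p = Sym2.mk u v ∧ u ≠ v ∧
    u ∈ V ∧ v ∈ V ∧ IsNN V u v ∧ IsNN V v u}.ncard

/-- The indegree of `v` in the 1NN digraph of `V`: the number of `u ∈ V` with `NN(u) = v`. -/
noncomputable def inDeg1 {d : ℕ} (V : Set (EuclideanSpace ℝ (Fin d)))
    (v : EuclideanSpace ℝ (Fin d)) : ℕ :=
  {u | u ∈ V ∧ IsNN V u v}.ncard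

/-- `Q_j^{(1)}(V)`: the number of points of `V` with indegree exactly `j` in the 1NN digraph. -/
noncomputable def Q1j {d : ℕ} (V : Set (EuclideanSpace ℝ (Fin d))) (j : ℕ) : ℕ :=
  {v | v ∈ V ∧ inDeg1 V v = j}.ncard

/-! The nearest-neighbour map `f` has no fixed points, and the reflexive pairs are its 2-cycles, so
`2 R` is the number of points `v` with `f (f v) = v`. If `2 R = n - 1`, every point but one, `z`,
lies on a 2-cycle. On these points `f` is an involution, so each of them has exactly one preimage
there, `f v`; besides, `f z` gets the second preimage `z`, and `z` gets none. -/

open Finset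

section SelfMap

variable {α : Type*} [DecidableEq α] {f : α → α} {M : Finset α}

theorem two_mul_card_image_sym2_mk (hmaps : Set.MapsTo f M M) (hinv : Set.LeftInvOn f f M)
    (hne : ∀ v ∈ M, f v ≠ v) : 2 * #(M.image fun v => s(v, f v)) = #M := by
  rw [card_eq_sum_card_image (fun v => s(v, f v)) M, mul_comm, ← smul_eq_mul, ← sum_const]
  refine sum_congr rfl fun p hp => ?_
  obtain ⟨u, hu, rfl⟩ := mem_image.1 hp
  have hfiber : {v ∈ M | s(v, f v) = s(u, f u)} = {u, f u} := by
    ext v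
    simp only [mem_filter, mem_insert, mem_singleton, Sym2.eq_iff]
    constructor
    · rintro ⟨-, ⟨rfl, -⟩ | ⟨rfl, -⟩⟩ <;> simp
    · rintro (rfl | rfl)
      · simp [hu]
      · exact ⟨hmaps hu, .inr ⟨rfl, hinv hu⟩⟩
  rw [hfiber, card_pair (hne u hu).symm]

theorem filter_apply_eq_of_leftInvOn (hmaps : Set.MapsTo f M M) (hinv : Set.LeftInvOn f f M)
    {v : α} (hv : v ∈ M) : {u ∈ M | f u = v} = {f v} := by
  ext u
  simp only [mem_filter, mem_singleton]
  constructor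
  · rintro ⟨hu, rfl⟩
    exact (hinv hu).symm
  · rintro rfl
    exact ⟨hmaps hv, hinv hv⟩

theorem filter_apply_eq_eq_empty_of_notMem (hmaps : Set.MapsTo f M M) {z : α} (hz : z ∉ M) :
    {u ∈ M | f u = z} = ∅ :=
  filter_eq_empty_iff.2 fun _ hu hfu => hz (hfu ▸ hmaps hu)

theorem card_filter_apply_eq_insert (hmaps : Set.MapsTo f M M) (hinv : Set.LeftInvOn f f M)
    {z : α} (hz : z ∉ M) (hfz : f z ∈ M) {v : α} (hv : v ∈ insert z M) :
    #{u ∈ insert z M | f u = v} = if v = z then 0 else if v = f z then 2 else 1 := by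
  rw [filter_insert]
  rcases mem_insert.1 hv with rfl | hvM
  · have hfvv : f v ≠ v := fun h => hz (h ▸ hfz)
    simp [hfvv, filter_apply_eq_eq_empty_of_notMem hmaps hz]
  · have hvz : v ≠ z := fun h => hz (h ▸ hvM)
    have hfvz : f v ≠ z := fun h => hz (h ▸ hmaps hvM)
    rw [filter_apply_eq_of_leftInvOn hmaps hinv hvM]
    by_cases hvfz : v = f z
    · subst hvfz
      simp [hvz, card_pair hfvz.symm]
    · simp [hvz, hvfz, Ne.symm hvfz]

end SelfMap

theorem card_filter_eq_of_zero_two_one {α : Type*} [DecidableEq α] {S : Finset α} {g : α → ℕ}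
    {z w : α} (hz : z ∈ S) (hw : w ∈ S) (hzw : z ≠ w)
    (hg : ∀ v ∈ S, g v = if v = z then 0 else if v = w then 2 else 1) :
    #{v ∈ S | g v = 0} = 1 ∧ #{v ∈ S | g v = 1} = #S - 2 ∧ #{v ∈ S | g v = 2} = 1 ∧
      ∀ j, 3 ≤ j → #{v ∈ S | g v = j} = 0 := by
  have hg0 : ∀ v ∈ S, g v = 0 ↔ v = z := fun v hv => by rw [hg v hv]; split_ifs <;> simp_all
  have hg2 : ∀ v ∈ S, g v = 2 ↔ v = w := fun v hv => by rw [hg v hv]; split_ifs <;> simp_all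
  have hg1 : ∀ v ∈ S, g v ≠ 1 ↔ v = z ∨ v = w := fun v hv => by
    rw [hg v hv]; split_ifs <;> simp_all
  refine ⟨?_, ?_, ?_, fun j hj => ?_⟩
  · rw [filter_congr hg0, filter_eq' S z, if_pos hz, card_singleton]
  · have hne : {v ∈ S | g v ≠ 1} = {z, w} := by
      rw [filter_congr hg1]
      ext v
      simp only [mem_filter, mem_insert, mem_singleton]
      exact ⟨And.right, by rintro (rfl | rfl) <;> simp_all⟩
    have := card_filter_add_card_filter_not (s := S) (fun v => g v = 1)
    rw [hne, card_pair hzw] at this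
    omega
  · rw [filter_congr hg2, filter_eq' S w, if_pos hw, card_singleton]
  · refine card_eq_zero.2 (filter_eq_empty_iff.2 fun v hv hgv => ?_)
    rw [hg v hv] at hgv
    split_ifs at hgv <;> omega

section NearestNeighbor

variable {d : ℕ} {V : Set (EuclideanSpace ℝ (Fin d))}

theorem IsNN.eq {v u u' : EuclideanSpace ℝ (Fin d)} (h : IsNN V v u) (h' : IsNN V v u') :
    u = u' := by
  by_contra hne
  exact lt_asymm (h.2.2 u' h'.1 h'.2.1 (Ne.symm hne)) (h'.2.2 u h.1 h.2.1 hne)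

theorem exists_isNN (hfin : V.Finite) (hdist : DistinctDists V) (hV : V.Nontrivial)
    {v : EuclideanSpace ℝ (Fin d)} (hv : v ∈ V) : ∃ u, IsNN V v u := by
  obtain ⟨u, ⟨huV, huv⟩, hmin⟩ := (V \ {v}).exists_min_image (dist v) hfin.sdiff
    (by simpa [Set.Nonempty, and_comm] using hV.exists_ne v)
  refine ⟨u, huV, huv, fun w hw hwv hwu => (hmin w ⟨hw, hwv⟩).lt_of_ne fun h => ?_⟩
  rcases hdist v u v w hv huV hv hw (Ne.symm huv) (Ne.symm hwv) h with ⟨-, h⟩ | ⟨h, -⟩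
  · exact hwu h.symm
  · exact hwv h.symm

variable {f : EuclideanSpace ℝ (Fin d) → EuclideanSpace ℝ (Fin d)}

theorem isNN_iff_eq (hf : ∀ v ∈ V, IsNN V v (f v)) {u v : EuclideanSpace ℝ (Fin d)}
    (hu : u ∈ V) : IsNN V u v ↔ f u = v :=
  ⟨(hf u hu).eq, fun h => h ▸ hf u hu⟩

variable {S : Finset (EuclideanSpace ℝ (Fin d))}

theorem Q1j_coe_eq_card_filter (j : ℕ) :
    Q1j (S : Set (EuclideanSpace ℝ (Fin d))) j = #{v ∈ S | inDeg1 S v = j} := by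
  rw [Q1j, ← Set.ncard_coe_finset, coe_filter]
  rfl

variable [DecidableEq (EuclideanSpace ℝ (Fin d))]

theorem inDeg1_coe_eq_card_filter (hf : ∀ v ∈ S, IsNN S v (f v))
    (v : EuclideanSpace ℝ (Fin d)) : inDeg1 S v = #{u ∈ S | f u = v} := by
  rw [inDeg1, ← Set.ncard_coe_finset, coe_filter]
  congr 1
  ext u
  exact and_congr_right (isNN_iff_eq hf)

theorem reflCount_coe_eq_card_image (hf : ∀ v ∈ S, IsNN S v (f v)) :
    reflCount (S : Set (EuclideanSpace ℝ (Fin d))) =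
      #({v ∈ S | f (f v) = v}.image fun v => s(v, f v)) := by
  rw [reflCount, ← Set.ncard_coe_finset]
  congr 1
  ext p
  simp only [Set.mem_ofPred_eq, coe_image, coe_filter, Set.mem_image, mem_coe]
  constructor
  · rintro ⟨u, v, rfl, -, hu, hv, huv, hvu⟩
    rw [isNN_iff_eq hf hu] at huv
    rw [isNN_iff_eq hf hv] at hvu
    exact ⟨u, ⟨hu, by rw [huv, hvu]⟩, by rw [huv]⟩
  · rintro ⟨u, ⟨hu, hffu⟩, rfl⟩
    have hfu := (hf u hu).1
    exact ⟨u, f u, rfl, (hf u hu).2.1.symm, hu, hfu, hf u hu, (isNN_iff_eq hf hfu).2 hffu⟩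

end NearestNeighbor

theorem reflCount_max_odd_indegrees_general (d n : ℕ) (hn : 3 ≤ n)
    (V : Set (EuclideanSpace ℝ (Fin d))) (hfin : V.Finite) (hcard : V.ncard = n)
    (hdist : DistinctDists V)
    (hR : 2 * reflCount V = n - 1) :
    Q1j V 0 = 1 ∧ Q1j V 1 = n - 2 ∧ Q1j V 2 = 1 ∧ ∀ j, 3 ≤ j → Q1j V j = 0 := by
  classical
  have hV : V.Nontrivial := (Set.one_lt_ncard_iff_nontrivial_and_finite.1 (by omega)).1
  choose! f hf using fun v (hv : v ∈ V) => exists_isNN hfin hdist hV hv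
  obtain ⟨S, rfl⟩ := hfin.exists_finset_coe
  rw [Set.ncard_coe_finset] at hcard
  set M := {v ∈ S | f (f v) = v}
  have hmaps : Set.MapsTo f M M := fun v hv => mem_filter.2 ⟨(hf v (mem_filter.1 hv).1).1,
    by rw [(mem_filter.1 hv).2]⟩
  have hinv : Set.LeftInvOn f f M := fun v hv => (mem_filter.1 hv).2
  have hM : #M + 1 = #S := by
    rw [← two_mul_card_image_sym2_mk hmaps hinv fun v hv => (hf v (mem_filter.1 hv).1).2.1,
      ← reflCount_coe_eq_card_image hf, hR, hcard]
    omega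
  obtain ⟨z, hzM, hS⟩ := exists_eq_insert_iff.2 ⟨filter_subset _ S, hM⟩
  have hzS : z ∈ S := hS ▸ mem_insert_self z M
  have hfzM : f z ∈ M := (mem_insert.1 (hS ▸ (hf z hzS).1)).resolve_left (hf z hzS).2.1
  have hindeg : ∀ v ∈ S, inDeg1 S v = if v = z then 0 else if v = f z then 2 else 1 :=
    fun v hv => by
      rw [inDeg1_coe_eq_card_filter hf, ← hS]
      exact card_filter_apply_eq_insert hmaps hinv hzM hfzM (hS ▸ hv)
  simp only [Q1j_coe_eq_card_filter, ← hcard]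
  exact card_filter_eq_of_zero_two_one hzS (hf z hzS).1 (hf z hzS).2.1.symm hindeg

/-- If `n` is odd and `R^{(1)}(V) = (n−1)/2`, then `Q_0^{(1)}(V) = 1`, `Q_1^{(1)}(V) = n−2`,
`Q_2^{(1)}(V) = 1`, and `Q_j^{(1)}(V) = 0` for all `j ≥ 3`. -/
theorem reflCount_max_odd_indegrees (d n : ℕ) (hodd : Odd n) (hn : 3 ≤ n)
    (V : Set (EuclideanSpace ℝ (Fin d))) (hfin : V.Finite) (hcard : V.ncard = n)
    (hdist : DistinctDists V)
    (hR : 2 * reflCount V = n - 1) :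
    Q1j V 0 = 1 ∧ Q1j V 1 = n - 2 ∧ Q1j V 2 = 1 ∧ ∀ j, 3 ≤ j → Q1j V j = 0 :=
  reflCount_max_odd_indegrees_general d n hn V hfin hcard hdist hR
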